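/- Let k(u) be a nonnegative measurable function on [0,∞) supported in [0, R] for some R > 0, and define u(z₁,z₂) = |z₁-z₂|²/(4 Im z₁ Im z₂) for z₁,z₂ in the upper half-plane. Then for t ∈ ℝ, the modified Zagier transform M(t) = ∬_ℍ k(u(z+t, 1/z̄)) y dx dy (with z = x+iy) vanishes whenever t² / 4 > R, since u(z+t, 1/z̄) ≥ t²/4 for all z ∈ ℍ. -/

import Mathlib

open Real MeasureTheory

/-- The hyperbolic point-pair invariant. -/
noncomputable def pairInvariant (z₁ z₂ : ℂ) : ℝ :=
  ‖z₁ - z₂‖ ^ 2 / (4 * z₁.im * z₂.im)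

/-! For `z = x + iy` the invariant `u(z + t, 1 / z̄)` equals `t² / 4 + (t x + |z|² - 1)² / (4 y²)`,
so it never drops below `t² / 4`, and a kernel supported in `[0, R]` with `R < t² / 4` makes the
integrand of the transform vanish identically. -/

open ComplexConjugate

theorem pairInvariant_add_ofReal_one_div_conj (t : ℝ) {z : ℂ} (hz : z.im ≠ 0) :
    pairInvariant (z + t) (1 / conj z) =
      t ^ 2 / 4 + (t * z.re + Complex.normSq z - 1) ^ 2 / (4 * z.im ^ 2) := by
  have hnormSq : Complex.normSq z ≠ 0 := Complex.normSq_pos.mpr (fun h => hz (by simp [h])) |>.ne'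
  rw [Complex.normSq_apply] at hnormSq
  simp only [pairInvariant, Complex.sq_norm, Complex.normSq_apply, one_div, Complex.inv_re,
    Complex.inv_im, Complex.conj_re, Complex.conj_im, Complex.sub_re,
    Complex.sub_im, Complex.add_re, Complex.add_im, Complex.ofReal_re, Complex.ofReal_im,
    neg_neg, neg_mul_neg, add_zero]
  field_simp
  ring

theorem sq_div_four_le_pairInvariant (t : ℝ) {z : ℂ} (hz : z.im ≠ 0) :
    t ^ 2 / 4 ≤ pairInvariant (z + t) (1 / conj z) := by
  rw [pairInvariant_add_ofReal_one_div_conj t hz]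
  exact le_add_of_nonneg_right (by positivity)

theorem apply_pairInvariant_eq_zero {k : ℝ → ℝ} {R t : ℝ}
    (hsupp : Function.support k ⊆ Set.Iic R) (ht : R < t ^ 2 / 4) {z : ℂ} (hz : z.im ≠ 0) :
    k (pairInvariant (z + t) (1 / conj z)) = 0 :=
  Function.notMem_support.mp fun h =>
    (hsupp h).not_gt (ht.trans_le (sq_div_four_le_pairInvariant t hz))

theorem stmt_19_general (k : ℝ → ℝ) (R : ℝ)
    (hsupp : Function.support k ⊆ Set.Icc 0 R)
    (t : ℝ) (ht : R < t ^ 2 / 4) :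
    (∀ z : ℂ, 0 < z.im →
      t ^ 2 / 4 ≤ pairInvariant (z + t) (1 / (starRingEnd ℂ z))) ∧
    (∫ x : ℝ, ∫ y in Set.Ioi (0 : ℝ),
      k (pairInvariant ((x : ℂ) + y * Complex.I + t)
          (1 / (starRingEnd ℂ ((x : ℂ) + y * Complex.I)))) * y) = 0 := by
  refine ⟨fun z hz => sq_div_four_le_pairInvariant t hz.ne', ?_⟩
  have hinner (x : ℝ) : ∫ y in Set.Ioi (0 : ℝ),
      k (pairInvariant ((x : ℂ) + y * Complex.I + t)
          (1 / (starRingEnd ℂ ((x : ℂ) + y * Complex.I)))) * y = 0 :=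
    setIntegral_eq_zero_of_forall_eq_zero fun y hy => by
      rw [apply_pairInvariant_eq_zero (hsupp.trans Set.Icc_subset_Iic_self) ht
        (by simpa using hy.ne'), zero_mul]
  simp only [hinner, integral_zero]

theorem stmt_19 (k : ℝ → ℝ) (R : ℝ) (hR : 0 < R)
    (hmeas : Measurable k) (hnonneg : ∀ u, 0 ≤ k u)
    (hsupp : Function.support k ⊆ Set.Icc 0 R)
    (t : ℝ) (ht : R < t ^ 2 / 4) :
    (∀ z : ℂ, 0 < z.im →
      t ^ 2 / 4 ≤ pairInvariant (z + t) (1 / (starRingEnd ℂ z))) ∧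
    (∫ x : ℝ, ∫ y in Set.Ioi (0 : ℝ),
      k (pairInvariant ((x : ℂ) + y * Complex.I + t)
          (1 / (starRingEnd ℂ ((x : ℂ) + y * Complex.I)))) * y) = 0 :=
  stmt_19_general k R hsupp t ht
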